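/- Realizability equivalence: the separated GR(k) game (GS, φ) is realizable (system wins from every initial configuration) if and only if the weak Büchi game (GS, GF(acc)) is realizable, where acc is the union of accepting SCCs determined by φ. -/

import Mathlib

open scoped Classical

/-- Reachability: reflexive-transitive closure of the edge relation. -/
def Reach {V : Type*} (E : V → V → Prop) : V → V → Prop := Relation.ReflTransGen E

/-- Two vertices lie in the same strongly connected component: mutual reachability. -/
def SameSCC {V : Type*} (E : V → V → Prop) (s t : V) : Prop := Reach E s t ∧ Reach E t s

/-- Edge relation of the product of two directed graphs (componentwise). -/
def prodEdge {I O : Type*} (EI : I → I → Prop) (EO : O → O → Prop) :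
    I × O → I × O → Prop := fun p q => EI p.1 q.1 ∧ EO p.2 q.2

/-- A system strategy: given the history of states so far and the new environment
input, choose the new output. -/
abbrev Strat (I O : Type*) := List (I × O) → I → O

/-- The history (prefix) of a play up to and including position `n`. -/
def hist {I O : Type*} (π : ℕ → I × O) (n : ℕ) : List (I × O) := (List.range (n + 1)).map π

/-- A play is consistent with system strategy `f` from state `s`. -/
def Consistent {I O : Type*} (f : Strat I O) (s : I × O) (π : ℕ → I × O) : Prop :=
  π 0 = s ∧ ∀ n, (π (n + 1)).2 = f (hist π n) (π (n + 1)).1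

/-- All environment moves along the play are edges of the input graph. -/
def EnvLegal {I O : Type*} (EI : I → I → Prop) (π : ℕ → I × O) : Prop :=
  ∀ n, EI (π n).1 (π (n + 1)).1

/-- All system moves along the play are edges of the output graph. -/
def SysLegal {I O : Type*} (EO : O → O → Prop) (π : ℕ → I × O) : Prop :=
  ∀ n, EO (π n).2 (π (n + 1)).2

/-- The play satisfies `P` infinitely often. -/
def InfOften {V : Type*} (P : V → Prop) (π : ℕ → V) : Prop := ∀ N, ∃ n, N ≤ n ∧ P (π n)

/-- `f` is a winning system strategy for the Büchi condition `GF acc` from `s`: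
every play from `s` consistent with `f` in which the environment moves legally has
legal system moves and visits `acc` infinitely often. -/
def WinningFrom {I O : Type*} (EI : I → I → Prop) (EO : O → O → Prop)
    (acc : I × O → Prop) (f : Strat I O) (s : I × O) : Prop :=
  ∀ π : ℕ → I × O, Consistent f s π → EnvLegal EI π →
    SysLegal EO π ∧ InfOften acc π

/-- The system can win the weak Büchi game `GF acc` from `s`. -/
def SysWins {I O : Type*} (EI : I → I → Prop) (EO : O → O → Prop)
    (acc : I × O → Prop) (s : I × O) : Prop := ∃ f, WinningFrom EI EO acc f s

/-- Projection onto the inputs of the SCC (of the product graph) containing `s`. -/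
def sccProjI {I O : Type*} (EI : I → I → Prop) (EO : O → O → Prop) (s : I × O) : Set I :=
  {i' | ∃ o', SameSCC (prodEdge EI EO) s (i', o')}

/-- Projection onto the outputs of the SCC (of the product graph) containing `s`. -/
def sccProjO {I O : Type*} (EI : I → I → Prop) (EO : O → O → Prop) (s : I × O) : Set O :=
  {o' | ∃ i', SameSCC (prodEdge EI EO) s (i', o')}

/-- A play satisfies the GR(k) formula
`⋀_l (⋀_i GF a_{l,i} → ⋀_j GF g_{l,j})`, with assumptions over inputs and
guarantees over outputs. -/
def SatGRk {I O : Type*} {k : ℕ} {nl ml : Fin k → ℕ}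
    (a : ∀ l : Fin k, Fin (nl l) → I → Prop)
    (g : ∀ l : Fin k, Fin (ml l) → O → Prop) (π : ℕ → I × O) : Prop :=
  ∀ l, (∀ i, InfOften (fun p : I × O => a l i p.1) π) →
    (∀ j, InfOften (fun p : I × O => g l j p.2) π)

/-- A state is accepting: for every conjunct `l`, either every guarantee is satisfied
somewhere in the output projection of its SCC, or some assumption is satisfied
nowhere in the input projection of its SCC. -/
def AcceptingSt {I O : Type*} {k : ℕ} {nl ml : Fin k → ℕ}
    (EI : I → I → Prop) (EO : O → O → Prop)
    (a : ∀ l : Fin k, Fin (nl l) → I → Prop)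
    (g : ∀ l : Fin k, Fin (ml l) → O → Prop) (s : I × O) : Prop :=
  ∀ l, (∀ j, ∃ o' ∈ sccProjO EI EO s, g l j o') ∨
    (∃ ii, ∀ i' ∈ sccProjI EI EO s, ¬ a l ii i')

/-- The system wins the separated GR(k) game from `s`. -/
def WinsGRk {I O : Type*} {k : ℕ} {nl ml : Fin k → ℕ}
    (EI : I → I → Prop) (EO : O → O → Prop)
    (a : ∀ l : Fin k, Fin (nl l) → I → Prop)
    (g : ∀ l : Fin k, Fin (ml l) → O → Prop) (s : I × O) : Prop :=
  ∃ f : Strat I O, ∀ π : ℕ → I × O, Consistent f s π → EnvLegal EI π →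
    SysLegal EO π ∧ SatGRk a g π

/-!
Every legal play on the finite product graph eventually stays in one strongly connected
component, and whether that component is accepting is decided by its projections. Either player
can make their own component tour its SCC: interleaving the actual moves `σ k` with round trips
`σ k ⇝ t k ⇝ σ k`, for targets `t` hitting every vertex infinitely often, yields a legal sequence,
computed online, that visits every vertex of the final SCC of `σ` infinitely often.
A GR(k) strategy fed with the toured inputs meets, infinitely often, every assumption occurring in
the final SCC, hence realizes the guarantees there, so that SCC is accepting. Conversely, touring
the outputs of a Büchi strategy for `acc` realizes every guarantee occurring in its final
accepting SCC, while an assumption absent from that SCC cannot hold infinitely often.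
-/

namespace SameSCC

variable {V : Type*} {E : V → V → Prop} {u v w : V}

lemma symm (h : SameSCC E u v) : SameSCC E v u := ⟨h.2, h.1⟩

lemma trans (h : SameSCC E u v) (h' : SameSCC E v w) : SameSCC E u w :=
  ⟨h.1.trans h'.1, h'.2.trans h.2⟩

variable {I O : Type*} {EI : I → I → Prop} {EO : O → O → Prop} {p q : I × O}

lemma fst (h : SameSCC (prodEdge EI EO) p q) : SameSCC EI p.1 q.1 :=
  ⟨Relation.ReflTransGen.lift Prod.fst (fun _ _ h => h.1) _ _ h.1,
    Relation.ReflTransGen.lift Prod.fst (fun _ _ h => h.1) _ _ h.2⟩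

lemma snd (h : SameSCC (prodEdge EI EO) p q) : SameSCC EO p.2 q.2 :=
  ⟨Relation.ReflTransGen.lift Prod.snd (fun _ _ h => h.2) _ _ h.1,
    Relation.ReflTransGen.lift Prod.snd (fun _ _ h => h.2) _ _ h.2⟩

end SameSCC

section Stabilization

variable {V : Type*} {E : V → V → Prop} {ρ : ℕ → V}

lemma reach_of_le (hρ : ∀ n, E (ρ n) (ρ (n + 1))) {m n : ℕ} (h : m ≤ n) :
    Reach E (ρ m) (ρ n) := by
  induction n, h using Nat.le_induction with
  | base => exact .refl
  | succ n _ ih => exact ih.tail (hρ n)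

lemma Finite.exists_infOften_eq [Finite V] (ρ : ℕ → V) : ∃ v, InfOften (· = v) ρ := by
  obtain ⟨v, hv⟩ := Finite.exists_infinite_fiber ρ
  refine ⟨v, fun N => ?_⟩
  obtain ⟨n, hn, hNn⟩ := (Set.infinite_coe_iff.1 hv).exists_gt N
  exact ⟨n, hNn.le, hn⟩

lemma exists_forall_sameSCC [Finite V] (hρ : ∀ n, E (ρ n) (ρ (n + 1))) :
    ∃ N, ∀ n, N ≤ n → SameSCC E (ρ N) (ρ n) := by
  obtain ⟨v, hv⟩ := Finite.exists_infOften_eq ρ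
  obtain ⟨N, -, hN⟩ := hv 0
  refine ⟨N, fun n hn => ⟨reach_of_le hρ hn, ?_⟩⟩
  obtain ⟨m, hm, hmv⟩ := hv n
  simpa [hmv, hN] using reach_of_le hρ hm

lemma exists_forall_infOften_eq (V : Type*) [Countable V] [Nonempty V] :
    ∃ t : ℕ → V, ∀ v, InfOften (· = v) t := by
  obtain ⟨e, he⟩ := exists_surjective_nat V
  refine ⟨fun k => e k.unpair.1, fun v N => ?_⟩
  obtain ⟨m, rfl⟩ := he v
  exact ⟨Nat.pair m N, Nat.right_le_pair m N, by simp⟩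

end Stabilization

def Causal {A B : Type*} (F : (ℕ → A) → ℕ → B) : Prop :=
  ∀ σ σ' n, (∀ k ≤ n, σ k = σ' k) → F σ n = F σ' n

namespace Causal

variable {A B C : Type*}

lemma comp {F : (ℕ → B) → ℕ → C} {G : (ℕ → A) → ℕ → B} (hF : Causal F) (hG : Causal G) :
    Causal fun σ => F (G σ) :=
  fun _ _ n h => hF _ _ n fun k hk => hG _ _ k fun j hj => h j (hj.trans hk)

lemma map {F : (ℕ → A) → ℕ → B} (hF : Causal F) (h : B → C) :
    Causal fun σ n => h (F σ n) :=
  fun _ _ n hσ => congrArg h (hF _ _ n hσ)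

end Causal

section Tour

variable {V : Type*} (E : V → V → Prop)

lemma exists_roundTrip {v w : V} (h : SameSCC E v w) :
    ∃ c : List V, c.IsChain E ∧ c.head? = some v ∧ c.getLast? = some v ∧ w ∈ c := by
  obtain ⟨l₁, hl₁, hw⟩ := List.exists_isChain_cons_of_relationReflTransGen h.1
  obtain ⟨l₂, hl₂, hv⟩ := List.exists_isChain_cons_of_relationReflTransGen h.2
  refine ⟨(v :: l₁) ++ l₂, hl₁.append hl₂.tail ?_, rfl, ?_, ?_⟩
  · intro x hx y hy
    rw [List.getLast?_eq_some_getLast (List.cons_ne_nil _ _), hw, Option.mem_some_iff] at hx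
    exact hx ▸ List.isChain_cons.1 hl₂ |>.1 y hy
  · rw [List.getLast?_append, List.getLast?_eq_some_getLast (List.cons_ne_nil _ _), hw]
    rcases l₂ with _ | ⟨y, l₂⟩
    · simpa using hv
    · simp [List.getLast?_eq_some_getLast, ← hv]
  · exact List.mem_append_left _ (hw ▸ List.getLast_mem _)

noncomputable def roundTrip (v w : V) : List V :=
  if h : SameSCC E v w then (exists_roundTrip E h).choose else [v]

lemma roundTrip_spec (v w : V) : (roundTrip E v w).IsChain E ∧
    (roundTrip E v w).head? = some v ∧ (roundTrip E v w).getLast? = some v := by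
  unfold roundTrip
  split_ifs with h
  · obtain ⟨hchain, hhead, hlast, -⟩ := (exists_roundTrip E h).choose_spec
    exact ⟨hchain, hhead, hlast⟩
  · exact ⟨.singleton v, rfl, rfl⟩

lemma mem_roundTrip {v w : V} (h : SameSCC E v w) : w ∈ roundTrip E v w := by
  rw [roundTrip, dif_pos h]
  exact (exists_roundTrip E h).choose_spec.2.2.2

variable (t : ℕ → V)

noncomputable def tourPrefix (σ : ℕ → V) (K : ℕ) : List V :=
  (List.range K).flatMap fun k => roundTrip E (σ k) (t k)

variable {E t}

lemma tourPrefix_succ (σ : ℕ → V) (K : ℕ) :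
    tourPrefix E t σ (K + 1) = tourPrefix E t σ K ++ roundTrip E (σ K) (t K) := by
  simp [tourPrefix, List.range_succ]

lemma le_length_tourPrefix (σ : ℕ → V) (K : ℕ) : K ≤ (tourPrefix E t σ K).length := by
  induction K with
  | zero => exact le_rfl
  | succ K ih =>
    have hne : roundTrip E (σ K) (t K) ≠ [] := fun h => by
      simpa [h] using (roundTrip_spec E (σ K) (t K)).2.1
    have := List.length_pos_iff.2 hne
    rw [tourPrefix_succ, List.length_append]
    omega

lemma tourPrefix_prefix (σ : ℕ → V) {m n : ℕ} (h : m ≤ n) :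
    tourPrefix E t σ m <+: tourPrefix E t σ n := by
  induction n, h using Nat.le_induction with
  | base => exact List.prefix_refl _
  | succ n _ ih => exact ih.trans (tourPrefix_succ σ n ▸ List.prefix_append _ _)

variable (E t)

/-- The `n`-th entry of the infinite concatenation of the blocks `roundTrip E (σ k) (t k)`. -/
noncomputable def tour (σ : ℕ → V) (n : ℕ) : V :=
  (tourPrefix E t σ (n + 1))[n]'((Nat.lt_succ_self n).trans_le (le_length_tourPrefix σ _))

variable {E t}

lemma getElem_tourPrefix (σ : ℕ → V) {K n : ℕ} (h : n < (tourPrefix E t σ K).length) :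
    (tourPrefix E t σ K)[n] = tour E t σ n := by
  rcases le_total K (n + 1) with hK | hK
  · exact (tourPrefix_prefix σ hK).getElem h
  · exact ((tourPrefix_prefix σ hK).getElem _).symm

lemma tour_zero (σ : ℕ → V) : tour E t σ 0 = σ 0 := by
  have h := (roundTrip_spec E (σ 0) (t 0)).2.1
  rw [List.head?_eq_getElem?, List.getElem?_eq_some_iff] at h
  simpa [tour, tourPrefix] using h.2

lemma causal_tour : Causal (tour E t) := by
  intro σ σ' n h
  have hpre : tourPrefix E t σ (n + 1) = tourPrefix E t σ' (n + 1) :=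
    List.flatMap_congr fun k hk => by rw [h k (Nat.lt_succ_iff.1 (List.mem_range.1 hk))]
  simp only [tour, hpre]

lemma isChain_tourPrefix {σ : ℕ → V} (hσ : ∀ n, E (σ n) (σ (n + 1))) (K : ℕ) :
    (tourPrefix E t σ K).IsChain E ∧ ∀ x ∈ (tourPrefix E t σ K).getLast?, E x (σ K) := by
  induction K with
  | zero => simp [tourPrefix]
  | succ K ih =>
    obtain ⟨hchain, hhead, hlast⟩ := roundTrip_spec E (σ K) (t K)
    rw [tourPrefix_succ, List.getLast?_append, hlast]
    refine ⟨ih.1.append hchain fun x hx y hy => ?_, by simpa using hσ K⟩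
    rw [hhead, Option.mem_some_iff] at hy
    exact hy ▸ ih.2 x hx

lemma tour_rel {σ : ℕ → V} (hσ : ∀ n, E (σ n) (σ (n + 1))) (n : ℕ) :
    E (tour E t σ n) (tour E t σ (n + 1)) := by
  have hlen : n + 2 ≤ (tourPrefix E t σ (n + 2)).length := le_length_tourPrefix σ _
  rw [← getElem_tourPrefix (K := n + 2) σ (by omega),
    ← getElem_tourPrefix (K := n + 2) σ (by omega)]
  exact List.isChain_iff_getElem.1 (isChain_tourPrefix hσ (n + 2)).1 n (by omega)

lemma exists_tour_eq_of_mem_roundTrip (σ : ℕ → V) {k : ℕ} {x : V}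
    (hx : x ∈ roundTrip E (σ k) (t k)) : ∃ n, k ≤ n ∧ tour E t σ n = x := by
  obtain ⟨j, hj, rfl⟩ := List.getElem_of_mem hx
  have hlen : (tourPrefix E t σ k).length + j < (tourPrefix E t σ (k + 1)).length := by
    simp [tourPrefix_succ, hj]
  refine ⟨_, (le_length_tourPrefix (E := E) (t := t) σ k).trans (Nat.le_add_right _ j), ?_⟩
  rw [← getElem_tourPrefix σ hlen]
  simp [tourPrefix_succ, List.getElem_append_right]

lemma infOften_tour_eq {σ : ℕ → V} {N : ℕ} (hN : ∀ n, N ≤ n → SameSCC E (σ N) (σ n))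
    {x : V} (hx : SameSCC E (σ N) x) (ht : InfOften (· = x) t) :
    InfOften (· = x) (tour E t σ) := by
  intro M
  obtain ⟨k, hk, rfl⟩ := ht (max M N)
  obtain ⟨n, hkn, hn⟩ := exists_tour_eq_of_mem_roundTrip σ
    (mem_roundTrip E ((hN k (le_of_max_le_right hk)).symm.trans hx))
  exact ⟨n, (le_of_max_le_left hk).trans hkn, hn⟩

end Tour

section Play

variable {I O : Type*}

lemma hist_succ (π : ℕ → I × O) (n : ℕ) : hist π (n + 1) = hist π n ++ [π (n + 1)] := by
  simp [hist, List.range_succ (n := n + 1)]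

def playPrefix (f : Strat I O) (o₀ : O) (μ : ℕ → I) : ℕ → List (I × O)
  | 0 => [(μ 0, o₀)]
  | n + 1 => playPrefix f o₀ μ n ++ [(μ (n + 1), f (playPrefix f o₀ μ n) (μ (n + 1)))]

def play (f : Strat I O) (o₀ : O) (μ : ℕ → I) : ℕ → I × O
  | 0 => (μ 0, o₀)
  | n + 1 => (μ (n + 1), f (playPrefix f o₀ μ n) (μ (n + 1)))

variable (f : Strat I O) (o₀ : O)

@[simp] lemma play_fst (μ : ℕ → I) (n : ℕ) : (play f o₀ μ n).1 = μ n := by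
  cases n <;> rfl

lemma hist_play (μ : ℕ → I) (n : ℕ) : hist (play f o₀ μ) n = playPrefix f o₀ μ n := by
  induction n with
  | zero => rfl
  | succ n ih => rw [hist_succ, ih]; rfl

lemma consistent_play (μ : ℕ → I) : Consistent f (μ 0, o₀) (play f o₀ μ) :=
  ⟨rfl, fun n => by rw [hist_play]; rfl⟩

lemma causal_play : Causal (play f o₀) := by
  have hpre : ∀ μ μ' n, (∀ k ≤ n, μ k = μ' k) → playPrefix f o₀ μ n = playPrefix f o₀ μ' n := by
    intro μ μ' n h
    induction n with
    | zero => simp [playPrefix, h 0 le_rfl]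
    | succ n ih =>
      simp [playPrefix, ih fun k hk => h k (Nat.le_succ_of_le hk), h (n + 1) le_rfl]
  intro μ μ' n h
  cases n with
  | zero => simp [play, h 0 le_rfl]
  | succ n => simp [play, hpre μ μ' n fun k hk => h k (Nat.le_succ_of_le hk), h (n + 1) le_rfl]

def Strat.ofCausal (G : (ℕ → I) → ℕ → O) : Strat I O :=
  fun h i => G (fun m => (h.map Prod.fst ++ [i]).getD m i) h.length

lemma Causal.snd_eq_of_consistent {G : (ℕ → I) → ℕ → O} (hG : Causal G) {s : I × O}
    {π : ℕ → I × O} (hπ : Consistent (Strat.ofCausal G) s π)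
    (h₀ : G (fun n => (π n).1) 0 = s.2) (n : ℕ) : (π n).2 = G (fun n => (π n).1) n := by
  cases n with
  | zero => rw [hπ.1, h₀]
  | succ n =>
    have hlist : (hist π n).map Prod.fst ++ [(π (n + 1)).1] =
        (List.range (n + 2)).map fun k => (π k).1 := by
      simp [hist, List.range_succ (n := n + 1)]
    have hlen : (hist π n).length = n + 1 := by simp [hist]
    rw [hπ.2 n, Strat.ofCausal, hlist, hlen]
    refine hG _ _ _ fun k hk => ?_
    simp [List.getD_eq_getElem?_getD, List.getElem?_range (by omega : k < n + 2)]

end Play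

section Realizability

variable {I O : Type*} {k : ℕ} {nl ml : Fin k → ℕ} {EI : I → I → Prop} {EO : O → O → Prop}
  {a : ∀ l : Fin k, Fin (nl l) → I → Prop} {g : ∀ l : Fin k, Fin (ml l) → O → Prop}

lemma sameSCC_fst_of_mem_sccProjI {s : I × O} {i : I} (h : i ∈ sccProjI EI EO s) :
    SameSCC EI s.1 i :=
  h.elim fun _ h => h.fst

lemma sameSCC_snd_of_mem_sccProjO {s : I × O} {o : O} (h : o ∈ sccProjO EI EO s) :
    SameSCC EO s.2 o :=
  h.elim fun _ h => h.snd

lemma AcceptingSt.of_sameSCC {s s' : I × O} (h : SameSCC (prodEdge EI EO) s s')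
    (hs : AcceptingSt EI EO a g s) : AcceptingSt EI EO a g s' := by
  have hI : sccProjI EI EO s = sccProjI EI EO s' :=
    Set.ext fun _ => exists_congr fun _ => ⟨h.symm.trans, h.trans⟩
  have hO : sccProjO EI EO s = sccProjO EI EO s' :=
    Set.ext fun _ => exists_congr fun _ => ⟨h.symm.trans, h.trans⟩
  rwa [AcceptingSt, ← hI, ← hO]

variable [Finite I] [Finite O]

theorem sysWins_of_winsGRk {s : I × O} (hw : WinsGRk EI EO a g s) :
    SysWins EI EO (AcceptingSt EI EO a g) s := by
  obtain ⟨f, hf⟩ := hw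
  have : Nonempty I := ⟨s.1⟩
  obtain ⟨t, ht⟩ := exists_forall_infOften_eq I
  let G : (ℕ → I) → ℕ → O := fun ι n => (play f s.2 (tour EI t ι) n).2
  have hG : Causal G := ((causal_play f s.2).comp causal_tour).map Prod.snd
  refine ⟨Strat.ofCausal G, fun π hπ henv => ?_⟩
  set ι : ℕ → I := fun n => (π n).1
  set ρ := play f s.2 (tour EI t ι)
  have hout : ∀ n, (π n).2 = (ρ n).2 := hG.snd_eq_of_consistent hπ rfl
  have hρ₀ : (tour EI t ι 0, s.2) = s := by rw [tour_zero, ← hπ.1]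
  obtain ⟨hsysρ, hsatρ⟩ := hf ρ (hρ₀ ▸ consistent_play f s.2 _)
    fun n => by simpa [ρ] using tour_rel (σ := ι) henv n
  have hsys : SysLegal EO π := fun n => by rw [hout, hout]; exact hsysρ n
  refine ⟨hsys, ?_⟩
  obtain ⟨N, hN⟩ := exists_forall_sameSCC (E := prodEdge EI EO) fun n => ⟨henv n, hsys n⟩
  suffices hacc : AcceptingSt EI EO a g (π N) from
    fun M => ⟨max M N, le_max_left _ _, hacc.of_sameSCC (hN _ (le_max_right _ _))⟩
  refine fun l => or_iff_not_imp_right.2 fun hass j => ?_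
  push Not at hass
  have hguar := hsatρ l (fun ii M => ?_) j
  · obtain ⟨m, hm, hgm⟩ := hguar N
    exact ⟨(π m).2, ⟨(π m).1, hN m hm⟩, hout m ▸ hgm⟩
  · obtain ⟨x, hxN, hax⟩ := hass ii
    obtain ⟨m, hm, hmx⟩ := infOften_tour_eq (σ := ι) (fun n hn => (hN n hn).fst)
      (sameSCC_fst_of_mem_sccProjI hxN) (ht x) M
    exact ⟨m, hm, by simpa [ρ, hmx] using hax⟩

theorem winsGRk_of_sysWins {s : I × O} (hw : SysWins EI EO (AcceptingSt EI EO a g) s) :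
    WinsGRk EI EO a g s := by
  obtain ⟨f, hf⟩ := hw
  have : Nonempty O := ⟨s.2⟩
  obtain ⟨t, ht⟩ := exists_forall_infOften_eq O
  let G : (ℕ → I) → ℕ → O := fun ι => tour EO t fun n => (play f s.2 ι n).2
  have hG : Causal G := causal_tour.comp ((causal_play f s.2).map Prod.snd)
  refine ⟨Strat.ofCausal G, fun π hπ henv => ?_⟩
  set ρ := play f s.2 fun n => (π n).1
  set ω : ℕ → O := fun n => (ρ n).2
  have hout : ∀ n, (π n).2 = tour EO t ω n := hG.snd_eq_of_consistent hπ (tour_zero _)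
  have hρ₀ : ((π 0).1, s.2) = s := by rw [hπ.1]
  have henvρ : EnvLegal EI ρ := fun n => by simpa [ρ] using henv n
  obtain ⟨hsysρ, haccρ⟩ := hf ρ (hρ₀ ▸ consistent_play f s.2 _) henvρ
  refine ⟨fun n => by rw [hout, hout]; exact tour_rel (σ := ω) hsysρ n, fun l hass => ?_⟩
  obtain ⟨N, hN⟩ := exists_forall_sameSCC (E := prodEdge EI EO) fun n => ⟨henvρ n, hsysρ n⟩
  obtain ⟨n₀, hn₀, hacc⟩ := haccρ N
  rcases hacc.of_sameSCC (hN n₀ hn₀).symm l with hguar | ⟨ii, hii⟩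
  · intro j M
    obtain ⟨o, ho, hgo⟩ := hguar j
    obtain ⟨m, hm, hmo⟩ := infOften_tour_eq (σ := ω) (fun n hn => (hN n hn).snd)
      (sameSCC_snd_of_mem_sccProjO ho) (ht o) M
    exact ⟨m, hm, show g l j (π m).2 by rw [hout, hmo]; exact hgo⟩
  · obtain ⟨m, hm, ham⟩ := hass ii N
    exact absurd (by simpa [ρ] using ham) (hii (ρ m).1 ⟨(ρ m).2, hN m hm⟩)

theorem winsGRk_iff_sysWins {s : I × O} :
    WinsGRk EI EO a g s ↔ SysWins EI EO (AcceptingSt EI EO a g) s :=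
  ⟨sysWins_of_winsGRk, winsGRk_of_sysWins⟩

end Realizability

/-- Realizability equivalence: the separated GR(k) game is realizable (for every
initial input satisfying θ_I there is an initial output satisfying θ_O from which
the system wins) iff the weak Büchi game GF(acc) is realizable, where acc is the
union of accepting SCCs determined by the GR(k) formula. -/
theorem grk_realizability_iff {I O : Type*} [Fintype I] [Fintype O]
    {k : ℕ} {nl ml : Fin k → ℕ}
    (EI : I → I → Prop) (EO : O → O → Prop)
    (a : ∀ l : Fin k, Fin (nl l) → I → Prop)
    (g : ∀ l : Fin k, Fin (ml l) → O → Prop)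
    (θI : I → Prop) (θO : O → Prop) :
    (∀ i, θI i → ∃ o, θO o ∧ WinsGRk EI EO a g (i, o)) ↔
    (∀ i, θI i → ∃ o, θO o ∧ SysWins EI EO (AcceptingSt EI EO a g) (i, o)) := by
  simp only [winsGRk_iff_sysWins]
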